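/- arXiv:2406.01050 — 7 statements merged into one kernel-verified Lean document; each statement's English description precedes it below -/
import Mathlib

section
/- Let A be an associative unital ring (not necessarily commutative) and let a, b be positive integers. Suppose x₁, x₂, τ ∈ A satisfy x₁x₂ = x₂x₁, τx₁ = x₂τ, τx₂ = x₁τ, and τ² = (x₁^a + x₂^a)². If x₁^b = 0, then x₂ is nilpotent; more precisely x₂^{b + 2ab} = 0. -/
/-- Lemma 4.2 of the paper: in a ring with elements `x₁, x₂, τ` satisfying the
defining relations of the quiver Hecke algebra `𝒮R(2i)` for an imaginary
non-isotropic index `i` (with `a = -a_{ii}/2 ≥ 1`), if `x₁ ^ b = 0` then `x₂`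
is nilpotent; more precisely `x₂ ^ (b + 2ab) = 0`. -/
theorem stmt0 (A : Type*) [Ring A] (a b : ℕ) (ha : 0 < a) (hb : 0 < b)
    (x₁ x₂ τ : A)
    (hcomm : x₁ * x₂ = x₂ * x₁)
    (hτ₁ : τ * x₁ = x₂ * τ)
    (hτ₂ : τ * x₂ = x₁ * τ)
    (hττ : τ ^ 2 = (x₁ ^ a + x₂ ^ a) ^ 2)
    (hx : x₁ ^ b = 0) :
    IsNilpotent x₂ ∧ x₂ ^ (b + 2 * a * b) = 0 := by
  have hc : Commute x₁ x₂ := hcomm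
  -- τ moves x₂-powers to x₁-powers
  have hτpow : ∀ n, τ * x₂ ^ n = x₁ ^ n * τ := by
    intro n
    induction n with
    | zero => simp
    | succ n ih =>
      rw [pow_succ, ← mul_assoc, ih, mul_assoc, hτ₂, ← mul_assoc, ← pow_succ]
  have hτb : τ * x₂ ^ b = 0 := by rw [hτpow, hx, zero_mul]
  have hE0 : (x₁ ^ a + x₂ ^ a) ^ 2 * x₂ ^ b = 0 := by
    rw [← hττ, sq, mul_assoc, hτb, mul_zero]
  set c : A := -((x₁ ^ a) ^ 2 + 2 * (x₁ ^ a * x₂ ^ a)) with hcdef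
  have hsq : (x₁ ^ a + x₂ ^ a) ^ 2
      = (x₁ ^ a) ^ 2 + 2 * (x₁ ^ a * x₂ ^ a) + (x₂ ^ a) ^ 2 := by
    have h := (hc.pow_pow a a).eq
    rw [sq, add_mul, mul_add, mul_add, ← h]
    noncomm_ring
  have hE : x₂ ^ (2 * a + b) = c * x₂ ^ b := by
    have h1 : ((x₁ ^ a) ^ 2 + 2 * (x₁ ^ a * x₂ ^ a)) * x₂ ^ b + (x₂ ^ a) ^ 2 * x₂ ^ b = 0 := by
      rw [← add_mul, ← hsq, hE0]
    have h2 := eq_neg_of_add_eq_zero_right h1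
    calc x₂ ^ (2 * a + b) = (x₂ ^ a) ^ 2 * x₂ ^ b := by
          rw [pow_add, mul_comm 2 a, pow_mul]
      _ = c * x₂ ^ b := by rw [h2, hcdef, neg_mul]
  have hcx₂ : Commute x₂ c :=
    (((hc.symm.pow_right a).pow_right 2).add_right
      ((Commute.ofNat_right x₂ 2).mul_right
        ((hc.symm.pow_right a).mul_right ((Commute.refl x₂).pow_right a)))).neg_right
  have key : ∀ k, x₂ ^ (2 * a * k + b) = c ^ k * x₂ ^ b := by
    intro k
    induction k with
    | zero => simp
    | succ k ih =>
      have h3 : 2 * a * (k + 1) + b = 2 * a + (2 * a * k + b) := by ring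
      rw [h3, pow_add, ih, ← mul_assoc, (hcx₂.pow_pow (2 * a) k).eq, mul_assoc,
        ← pow_add, hE, ← mul_assoc, ← pow_succ]
  have hcb : c ^ b = 0 := by
    have hfac : ((x₁ ^ a) ^ 2 + 2 * (x₁ ^ a * x₂ ^ a)) = x₁ ^ a * (x₁ ^ a + 2 * x₂ ^ a) := by
      noncomm_ring
    have hcomm2 : Commute (x₁ ^ a) (x₁ ^ a + 2 * x₂ ^ a) :=
      (Commute.refl _).add_right
        ((Commute.ofNat_right (x₁ ^ a) 2).mul_right (hc.pow_pow a a))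
    rw [hcdef, neg_pow, hfac, hcomm2.mul_pow, ← pow_mul, mul_comm a b, pow_mul, hx,
      zero_pow ha.ne', zero_mul, mul_zero]
  have hfin : x₂ ^ (b + 2 * a * b) = 0 := by
    rw [add_comm, key b, hcb, zero_mul]
  exact ⟨⟨b + 2 * a * b, hfin⟩, hfin⟩
end

section
/- Let A be an associative unital ring (not necessarily commutative) and let a, b be positive integers. Suppose x₁, x₂, τ ∈ A satisfy x₁x₂ = x₂x₁, τx₁ = x₂τ, τx₂ = x₁τ, τ² = (x₁^a + x₂^a)², and x₁^b = 0. Then for every integer k with 0 ≤ k ≤ 2b one has x₁^{ka} · x₂^{b + 2ab − ka} = 0. -/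
private lemma mul4 {A : Type*} [Ring A] {u v : A} (c : Commute u v) (m n p q : ℕ) :
    (u ^ m * v ^ n) * (u ^ p * v ^ q) = u ^ (m + p) * v ^ (n + q) := by
  have h : v ^ n * u ^ p = u ^ p * v ^ n := ((c.symm).pow_pow n p).eq
  rw [pow_add, pow_add]
  calc (u ^ m * v ^ n) * (u ^ p * v ^ q)
      = u ^ m * (v ^ n * u ^ p) * v ^ q := by rw [mul_assoc, mul_assoc, mul_assoc]
    _ = u ^ m * (u ^ p * v ^ n) * v ^ q := by rw [h]
    _ = u ^ m * u ^ p * (v ^ n * v ^ q) := by rw [mul_assoc, mul_assoc, mul_assoc]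

private lemma key {A : Type*} [Ring A] (a b : ℕ) (ha : 0 < a) (hb : 0 < b)
    (x₁ x₂ τ : A)
    (hcomm : x₁ * x₂ = x₂ * x₁)
    (hτ₁ : τ * x₁ = x₂ * τ)
    (hττ : τ ^ 2 = (x₁ ^ a + x₂ ^ a) ^ 2)
    (hx : x₁ ^ b = 0) :
    ∀ d k : ℕ, k + d = 2 * b → x₁ ^ (k * a) * x₂ ^ (b + d * a) = 0 := by
  have c : Commute x₁ x₂ := hcomm
  have hτpow : ∀ n, τ * x₁ ^ n = x₂ ^ n * τ := by
    intro n
    induction n with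
    | zero => simp
    | succ n ih =>
      rw [pow_succ, ← mul_assoc, ih, mul_assoc, hτ₁, pow_succ, ← mul_assoc, mul_assoc]
  have hrel : x₂ ^ b * (x₁ ^ (2 * a) + 2 * (x₁ ^ a * x₂ ^ a) + x₂ ^ (2 * a)) = 0 := by
    have h1 : x₂ ^ b * τ ^ 2 = 0 := by
      have h2 : τ * x₁ ^ b * τ = x₂ ^ b * τ ^ 2 := by
        rw [hτpow b, sq, mul_assoc]
      rw [← h2, hx, mul_zero, zero_mul]
    have h3 : (x₁ ^ a + x₂ ^ a) ^ 2 = x₁ ^ (2 * a) + 2 * (x₁ ^ a * x₂ ^ a) + x₂ ^ (2 * a) := by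
      have hc : x₂ ^ a * x₁ ^ a = x₁ ^ a * x₂ ^ a := ((c.pow_pow a a).symm).eq
      rw [sq, add_mul, mul_add, mul_add, hc, ← pow_add, ← pow_add,
        show a + a = 2 * a by ring]
      noncomm_ring
    rw [← h3, ← hττ, h1]
  -- base case helper : if b ≤ k * a then x₁ ^ (k*a) = 0
  have hbase : ∀ k e : ℕ, b ≤ k * a → x₁ ^ (k * a) * x₂ ^ e = 0 := by
    intro k e hk
    rw [show k * a = b + (k * a - b) by omega, pow_add, hx, zero_mul, zero_mul]
  intro d
  induction d using Nat.strong_induction_on with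
  | _ d ih =>
    intro k hk
    match d, ih, hk with
    | 0, ih, hk =>
      apply hbase
      have : k = 2 * b := by omega
      subst this
      calc b ≤ 2 * b := by omega
        _ ≤ 2 * b * a := Nat.le_mul_of_pos_right _ ha
    | 1, ih, hk =>
      apply hbase
      have hkb : b ≤ k := by omega
      calc b ≤ k := hkb
        _ ≤ k * a := Nat.le_mul_of_pos_right _ ha
    | (d + 2), ih, hk =>
      have h1 : x₁ ^ ((k + 1) * a) * x₂ ^ (b + (d + 1) * a) = 0 :=
        ih (d + 1) (by omega) (k + 1) (by omega)
      have h2 : x₁ ^ ((k + 2) * a) * x₂ ^ (b + d * a) = 0 :=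
        ih d (by omega) (k + 2) (by omega)
      have h0 : x₁ ^ (k * a) *
          (x₂ ^ b * (x₁ ^ (2 * a) + 2 * (x₁ ^ a * x₂ ^ a) + x₂ ^ (2 * a))) * x₂ ^ (d * a) = 0 := by
        rw [hrel, mul_zero, zero_mul]
      have hexp : x₁ ^ (k * a) *
          (x₂ ^ b * (x₁ ^ (2 * a) + 2 * (x₁ ^ a * x₂ ^ a) + x₂ ^ (2 * a))) * x₂ ^ (d * a)
          = x₁ ^ ((k + 2) * a) * x₂ ^ (b + d * a)
            + 2 * (x₁ ^ ((k + 1) * a) * x₂ ^ (b + (d + 1) * a))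
            + x₁ ^ (k * a) * x₂ ^ (b + (d + 2) * a) := by
        have e1 : (x₁ ^ (k * a) * x₂ ^ b) * (x₁ ^ (2 * a) * x₂ ^ (d * a))
            = x₁ ^ ((k + 2) * a) * x₂ ^ (b + d * a) := by
          rw [mul4 c, show k * a + 2 * a = (k + 2) * a by ring]
        have e2 : (x₁ ^ (k * a) * x₂ ^ b) * (x₁ ^ a * x₂ ^ (a + d * a))
            = x₁ ^ ((k + 1) * a) * x₂ ^ (b + (d + 1) * a) := by
          rw [mul4 c, show k * a + a = (k + 1) * a by ring,
            show b + (a + d * a) = b + (d + 1) * a by ring]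
        have e3 : (x₁ ^ (k * a) * x₂ ^ b) * (x₂ ^ (2 * a + d * a))
            = x₁ ^ (k * a) * x₂ ^ (b + (d + 2) * a) := by
          rw [mul_assoc, ← pow_add, show b + (2 * a + d * a) = b + (d + 2) * a by ring]
        calc x₁ ^ (k * a) *
            (x₂ ^ b * (x₁ ^ (2 * a) + 2 * (x₁ ^ a * x₂ ^ a) + x₂ ^ (2 * a))) * x₂ ^ (d * a)
            = (x₁ ^ (k * a) * x₂ ^ b) * (x₁ ^ (2 * a) * x₂ ^ (d * a))
              + 2 * ((x₁ ^ (k * a) * x₂ ^ b) * (x₁ ^ a * (x₂ ^ a * x₂ ^ (d * a))))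
              + (x₁ ^ (k * a) * x₂ ^ b) * (x₂ ^ (2 * a) * x₂ ^ (d * a)) := by
              noncomm_ring
          _ = x₁ ^ ((k + 2) * a) * x₂ ^ (b + d * a)
              + 2 * (x₁ ^ ((k + 1) * a) * x₂ ^ (b + (d + 1) * a))
              + x₁ ^ (k * a) * x₂ ^ (b + (d + 2) * a) := by
              rw [e1, ← pow_add, e2, ← pow_add, e3]
      rw [hexp, h1, h2] at h0
      simpa using h0

/-- The downward-induction claim in the proof of Lemma 4.2 of the paper:
with the relations of the quiver Hecke algebra `𝒮R(2i)` for an imaginary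
non-isotropic index (`a = -a_{ii}/2 ≥ 1`) and `x₁ ^ b = 0`, one has
`x₁ ^ (ka) * x₂ ^ (b + 2ab - ka) = 0` for all `0 ≤ k ≤ 2b`. -/
theorem stmt1 (A : Type*) [Ring A] (a b : ℕ) (ha : 0 < a) (hb : 0 < b)
    (x₁ x₂ τ : A)
    (hcomm : x₁ * x₂ = x₂ * x₁)
    (hτ₁ : τ * x₁ = x₂ * τ)
    (hτ₂ : τ * x₂ = x₁ * τ)
    (hττ : τ ^ 2 = (x₁ ^ a + x₂ ^ a) ^ 2)
    (hx : x₁ ^ b = 0) :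
    ∀ k : ℕ, k ≤ 2 * b → x₁ ^ (k * a) * x₂ ^ (b + 2 * a * b - k * a) = 0 := by
  intro k hk
  have h2 : 2 * a * b = k * a + (2 * b - k) * a := by
    rw [← add_mul, show k + (2 * b - k) = 2 * b by omega]; ring
  have he : b + 2 * a * b - k * a = b + (2 * b - k) * a := by omega
  rw [he]
  exact key a b ha hb x₁ x₂ τ hcomm hτ₁ hττ hx (2 * b - k) k (by omega)
end

section
/- Let A be an associative unital ring (not necessarily commutative), n ≥ 1 and a, b ≥ 1 integers. Suppose x₁, …, x_n ∈ A pairwise commute and τ₁, …, τ_{n−1} ∈ A satisfy τ_k x_k = x_{k+1} τ_k, τ_k x_{k+1} = x_k τ_k, τ_k x_j = x_j τ_k for j ∉ {k, k+1}, and τ_k² = (x_k^a + x_{k+1}^a)². If x₁^b = 0, then every x_k is nilpotent; more precisely x_k^{b(1+2a)^{k−1}} = 0 for all 1 ≤ k ≤ n. -/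
lemma key_step {A : Type*} [Ring A] (a c : ℕ) (ha : 1 ≤ a) (y z : A)
    (hyz : Commute y z) (hy : y ^ c = 0) (hz : z ^ c * (y ^ a + z ^ a) ^ 2 = 0) :
    z ^ (c * (1 + 2 * a)) = 0 := by
  set u : A := y ^ a + z ^ a with hu
  have hcuv : Commute u (-(y ^ a)) := by
    have h1 : Commute (y ^ a) (z ^ a) := (hyz.pow_pow a a)
    exact (Commute.add_left (Commute.refl _) h1.symm).neg_right
  have hza : z ^ a = u + (-(y ^ a)) := by rw [hu]; abel
  have hpow : z ^ (c * (1 + 2 * a)) = z ^ c * (z ^ a) ^ (2 * c) := by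
    rw [← pow_mul, ← pow_add]; ring_nf
  rw [hpow, hza, hcuv.add_pow, Finset.mul_sum]
  apply Finset.sum_eq_zero
  intro m hm
  simp only [Finset.mem_range] at hm
  rcases le_or_gt 2 m with h2 | h2
  · have : u ^ m = u ^ 2 * u ^ (m - 2) := by rw [← pow_add]; congr 1; omega
    rw [this, ← mul_assoc, ← mul_assoc, ← mul_assoc, hz, zero_mul, zero_mul, zero_mul]
  · have he : c ≤ a * (2 * c - m) :=
      le_trans (by omega : c ≤ 2 * c - m) (Nat.le_mul_of_pos_left _ ha)
    have : (-(y ^ a)) ^ (2 * c - m) =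
        (-1 : A) ^ (2 * c - m) * (y ^ (a * (2 * c - m) - c) * y ^ c) := by
      rw [neg_pow, ← pow_mul, ← pow_add]
      congr 2
      omega
    rw [this, hy, mul_zero, mul_zero, mul_zero, zero_mul, mul_zero]

/-- The single-imaginary-colour case of Lemma 4.7(i): in a ring with dots
`x 1, …, x n` and crossings `τ 1, …, τ (n-1)` satisfying the relations of the
quiver Hecke algebra `𝒮R(ni)` for an imaginary non-isotropic index
(`a = -a_{ii}/2 ≥ 1`), if `x 1 ^ b = 0` then every `x k` is nilpotent; more
precisely `x k ^ (b * (1 + 2a) ^ (k - 1)) = 0` for `1 ≤ k ≤ n`. -/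
theorem stmt2 (A : Type*) [Ring A] (n a b : ℕ) (hn : 1 ≤ n) (ha : 1 ≤ a) (hb : 1 ≤ b)
    (x τ : ℕ → A)
    (hcomm : ∀ j k, 1 ≤ j → j ≤ n → 1 ≤ k → k ≤ n → x j * x k = x k * x j)
    (hτx : ∀ k, 1 ≤ k → k ≤ n - 1 → τ k * x k = x (k + 1) * τ k)
    (hτx' : ∀ k, 1 ≤ k → k ≤ n - 1 → τ k * x (k + 1) = x k * τ k)
    (hτxfar : ∀ k j, 1 ≤ k → k ≤ n - 1 → 1 ≤ j → j ≤ n → j ≠ k → j ≠ k + 1 →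
      τ k * x j = x j * τ k)
    (hττ : ∀ k, 1 ≤ k → k ≤ n - 1 → τ k ^ 2 = (x k ^ a + x (k + 1) ^ a) ^ 2)
    (hx : x 1 ^ b = 0) :
    ∀ k, 1 ≤ k → k ≤ n →
      IsNilpotent (x k) ∧ x k ^ (b * (1 + 2 * a) ^ (k - 1)) = 0 := by
  have main : ∀ k, 1 ≤ k → k ≤ n → x k ^ (b * (1 + 2 * a) ^ (k - 1)) = 0 := by
    intro k hk
    induction k with
    | zero => omega
    | succ k ih =>
      intro hkn
      rcases Nat.eq_zero_or_pos k with hk0 | hk1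
      · subst hk0
        simpa using hx
      · -- k ≥ 1, k + 1 ≤ n
        have hkn' : k ≤ n - 1 := by omega
        have hkn'' : k ≤ n := by omega
        set c := b * (1 + 2 * a) ^ (k - 1) with hc
        have hxk : x k ^ c = 0 := ih hk1 hkn''
        -- semiconjugation: τ k * (x k)^c = (x (k+1))^c * τ k
        have hsc : SemiconjBy (τ k) (x k) (x (k + 1)) := hτx k hk1 hkn'
        have hsc' : τ k * x k ^ c = x (k + 1) ^ c * τ k := (hsc.pow_right c).eq
        have hz : x (k + 1) ^ c * (x k ^ a + x (k + 1) ^ a) ^ 2 = 0 := by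
          have : x (k + 1) ^ c * τ k ^ 2 = 0 := by
            have : x (k + 1) ^ c * τ k * τ k = 0 := by
              rw [← hsc', hxk, mul_zero, zero_mul]
            rw [pow_two, ← mul_assoc, this]
          rwa [hττ k hk1 hkn'] at this
        have hyz : Commute (x k) (x (k + 1)) :=
          hcomm k (k + 1) hk1 hkn'' (by omega) (by omega)
        have := key_step a c ha (x k) (x (k + 1)) hyz hxk hz
        have hexp : c * (1 + 2 * a) = b * (1 + 2 * a) ^ (k + 1 - 1) := by
          rw [hc, mul_assoc, ← pow_succ]
          congr 2
          omega
        rwa [hexp] at this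
  intro k hk hkn
  exact ⟨⟨b * (1 + 2 * a) ^ (k - 1), main k hk hkn⟩, main k hk hkn⟩
end

section
/- Let A be an associative unital ring (not necessarily commutative), and let n ≥ 1, ℓ ≥ 0 be integers with n ≥ ℓ + 1. Suppose x₁, …, x_n ∈ A pairwise commute and τ₁, …, τ_{n−1} ∈ A satisfy: τ_k² = 0; τ_k τ_{k+1} τ_k = τ_{k+1} τ_k τ_{k+1}; τ_k τ_l = τ_l τ_k for |k − l| ≥ 2; τ_k x_j = x_j τ_k for j ∉ {k, k+1}; τ_k x_k = x_{k+1} τ_k + 1; and τ_k x_{k+1} = x_k τ_k − 1. If x₁^ℓ = 0, then 1 = 0 in A, i.e. A is the zero ring. -/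
/-!
Let `I = τ₁A + ⋯ + τ_ℓA`, the right ideal spanned by the `τ_j` (a `Submodule Aᵐᵒᵖ A`).
From `x_k τ_k = τ_k x_{k+1} + 1` one gets `h_{m+1}(x₁, …, x_k) τ_k ≡ h_m(x₁, …, x_{k+1})`
modulo `τ_k A`, so starting from `h_ℓ(x₁) = x₁^ℓ = 0` induction on `k` gives
`h_{ℓ+1-k}(x₁, …, x_k) ∈ τ₁A + ⋯ + τ_{k-1}A`; for `k = ℓ + 1` this says `1 ∈ I`.

On the other hand every word in `τ₁, …, τ_L` is either `0` or equal to
`τ_k τ_{k+1} ⋯ τ_L` times a word in `τ₁, …, τ_{L-1}`, so words of length more than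
`L(L+1)/2` vanish. As `1 ∈ I`, every word `w` is a sum of terms `w τ_j b`; by downward
induction on the length all words vanish, the empty one included.
-/

structure NilCoxeterRelations {A : Type*} [Ring A] (τ : ℕ → A) (N : ℕ) : Prop where
  sq_eq_zero : ∀ k, 1 ≤ k → k ≤ N → τ k ^ 2 = 0
  braid : ∀ k, 1 ≤ k → k + 1 ≤ N → τ k * τ (k + 1) * τ k = τ (k + 1) * τ k * τ (k + 1)
  comm : ∀ k l, 1 ≤ k → k ≤ N → 1 ≤ l → l ≤ N → (k + 2 ≤ l ∨ l + 2 ≤ k) → τ k * τ l = τ l * τ k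

namespace NilCoxeterRelations

variable {A : Type*} [Ring A] {τ : ℕ → A} {N : ℕ}

lemma commute_prod_range' (h : NilCoxeterRelations τ N) {j k m : ℕ} (hj : 1 ≤ j)
    (hjk : j + 2 ≤ k) (hkm : k + m ≤ N + 1) :
    Commute (τ j) ((List.range' k m).map τ).prod := by
  refine Commute.list_prod_right _ _ fun _ hb ↦ ?_
  obtain ⟨i, hi, rfl⟩ := List.mem_map.mp hb
  rw [List.mem_range'_1] at hi
  exact h.comm j i hj (by omega) (by omega) (by omega) (Or.inl (by omega))

lemma mul_prod_range'_succ_self (h : NilCoxeterRelations τ N) {k m : ℕ} (hk : 1 ≤ k)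
    (hkm : k + m ≤ N) :
    τ k * ((List.range' k (m + 1)).map τ).prod = 0 := by
  rw [List.range'_succ, List.map_cons, List.prod_cons, ← mul_assoc, ← pow_two,
    h.sq_eq_zero k hk (by omega), zero_mul]

lemma mul_prod_range' (h : NilCoxeterRelations τ N) {j k m : ℕ} (hk : 1 ≤ k) (hkj : k < j)
    (hjm : j < k + m) (hkm : k + m ≤ N + 1) :
    τ j * ((List.range' k m).map τ).prod = ((List.range' k m).map τ).prod * τ (j - 1) := by
  induction m generalizing k with
  | zero => omega
  | succ m ih =>
    rw [List.range'_succ, List.map_cons, List.prod_cons]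
    rcases (by omega : k + 2 ≤ j ∨ j = k + 1) with hj | rfl
    · rw [← mul_assoc, h.comm j k (by omega) (by omega) hk (by omega) (Or.inr hj), mul_assoc,
        ih (by omega) (by omega) (by omega) (by omega), mul_assoc]
    · obtain ⟨m, rfl⟩ : ∃ m', m = m' + 1 := ⟨m - 1, by omega⟩
      rw [List.range'_succ, List.map_cons, List.prod_cons, Nat.add_sub_cancel]
      simp only [← mul_assoc]
      rw [← h.braid k hk (by omega), mul_assoc _ (τ k),
        (h.commute_prod_range' hk le_rfl (by omega)).eq]
      simp only [mul_assoc]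

lemma prod_eq_zero_or_eq_prod_range'_mul (h : NilCoxeterRelations τ N) {L : ℕ} (hL : L ≤ N)
    (w : List ℕ) (hw : ∀ j ∈ w, j ∈ Set.Icc 1 L) :
    (w.map τ).prod = 0 ∨ ∃ (k m : ℕ) (v : List ℕ), 1 ≤ k ∧ k + m = L + 1 ∧
      (∀ j ∈ v, j ∈ Set.Icc 1 (L - 1)) ∧ m + v.length = w.length ∧
      (w.map τ).prod = ((List.range' k m).map τ).prod * (v.map τ).prod := by
  induction w with
  | nil => exact .inr ⟨L + 1, 0, [], by omega, rfl, by simp, rfl, by simp⟩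
  | cons j w ih =>
    obtain ⟨hj1, hjL⟩ := hw j List.mem_cons_self
    rcases ih fun i hi ↦ hw i (List.mem_cons_of_mem j hi) with
      hzero | ⟨k, m, v, hk, hkm, hv, hlen, hprod⟩
    · exact .inl (by rw [List.map_cons, List.prod_cons, hzero, mul_zero])
    rw [List.map_cons, List.prod_cons, hprod]
    rcases (by omega : j + 2 ≤ k ∨ j + 1 = k ∨ j = k ∨ k < j) with hjk | rfl | rfl | hkj
    · refine .inr ⟨k, m, j :: v, hk, hkm, ?_, by simp [← hlen]; omega, ?_⟩
      · simp only [List.mem_cons, forall_eq_or_imp]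
        exact ⟨⟨hj1, by omega⟩, hv⟩
      · rw [← mul_assoc, (h.commute_prod_range' hj1 hjk (by omega)).eq, List.map_cons,
          List.prod_cons, mul_assoc]
    · refine .inr ⟨j, m + 1, v, hj1, by omega, hv, by simp [← hlen]; omega, ?_⟩
      rw [List.range'_succ, List.map_cons, List.prod_cons, mul_assoc]
    · obtain ⟨m, rfl⟩ : ∃ m', m = m' + 1 := ⟨m - 1, by omega⟩
      exact .inl (by rw [← mul_assoc, h.mul_prod_range'_succ_self hk (by omega), zero_mul])
    · refine .inr ⟨k, m, (j - 1) :: v, hk, hkm, ?_, by simp [← hlen]; omega, ?_⟩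
      · simp only [List.mem_cons, forall_eq_or_imp]
        exact ⟨⟨by omega, by omega⟩, hv⟩
      · rw [← mul_assoc, h.mul_prod_range' hk hkj (by omega) (by omega), List.map_cons,
          List.prod_cons, mul_assoc]

lemma prod_eq_zero_of_lt_length (h : NilCoxeterRelations τ N) {L : ℕ} (hL : L ≤ N)
    (w : List ℕ) (hw : ∀ j ∈ w, j ∈ Set.Icc 1 L) (hlen : L * (L + 1) < 2 * w.length) :
    (w.map τ).prod = 0 := by
  induction L generalizing w with
  | zero =>
    obtain ⟨j, hj⟩ := List.exists_mem_of_length_pos (by omega : 0 < w.length)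
    obtain ⟨hj1, hj0⟩ := hw j hj
    omega
  | succ L ih =>
    rcases h.prod_eq_zero_or_eq_prod_range'_mul hL w hw with
      hzero | ⟨k, m, v, hk, hkm, hv, hvlen, hprod⟩
    · exact hzero
    have hexpand : (L + 1) * (L + 1 + 1) = L * (L + 1) + 2 * (L + 1) := by ring
    rw [hprod, ih (by omega) v hv (by omega), mul_zero]

end NilCoxeterRelations

section CompleteHomogeneous

variable {A : Type*} [Ring A] (x : ℕ → A)

/-- `completeHomogeneous x k m` is `h_m(x₁, …, x_k)`, each monomial written with its
variables in increasing order. -/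
def completeHomogeneous : ℕ → ℕ → A
  | _, 0 => 1
  | 0, _ + 1 => 0
  | k + 1, m + 1 => completeHomogeneous k (m + 1) + completeHomogeneous (k + 1) m * x (k + 1)

@[simp]
lemma completeHomogeneous_zero_right (k : ℕ) : completeHomogeneous x k 0 = 1 := by
  cases k <;> rw [completeHomogeneous]

lemma completeHomogeneous_succ_succ (k m : ℕ) :
    completeHomogeneous x (k + 1) (m + 1) =
      completeHomogeneous x k (m + 1) + completeHomogeneous x (k + 1) m * x (k + 1) := by
  rw [completeHomogeneous]

lemma completeHomogeneous_one (m : ℕ) : completeHomogeneous x 1 m = x 1 ^ m := by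
  induction m with
  | zero => simp
  | succ m ih => rw [completeHomogeneous_succ_succ, ih, pow_succ]; simp [completeHomogeneous]

variable {x}

lemma commute_completeHomogeneous {t : A} {k : ℕ} (ht : ∀ i, 1 ≤ i → i ≤ k → Commute t (x i))
    (m : ℕ) : Commute t (completeHomogeneous x k m) := by
  induction k generalizing m with
  | zero => cases m <;> simp [completeHomogeneous]
  | succ k ihk =>
    induction m with
    | zero => simp
    | succ m ihm =>
      rw [completeHomogeneous_succ_succ]
      exact (ihk (fun i hi hik ↦ ht i hi (by omega)) _).add_right
        (ihm.mul_right (ht (k + 1) (by omega) le_rfl))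

/-- In the nilHecke algebra, `f τ = τ (s f) + ∂ f` with `∂` the divided difference in
`x_{k+1}, x_{k+2}`, and `∂ h_{m+1}(x₁, …, x_{k+1}) = h_m(x₁, …, x_{k+2})`. -/
lemma exists_completeHomogeneous_mul_eq {t : A} {k : ℕ}
    (ht : ∀ i, 1 ≤ i → i ≤ k → Commute t (x i)) (hxt : x (k + 1) * t = t * x (k + 2) + 1)
    (m : ℕ) : ∃ g, completeHomogeneous x (k + 1) (m + 1) * t =
      t * g + completeHomogeneous x (k + 2) m := by
  induction m with
  | zero =>
    refine ⟨completeHomogeneous x k 1 + x (k + 2), ?_⟩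
    rw [completeHomogeneous_succ_succ, completeHomogeneous_zero_right, one_mul, add_mul,
      ← (commute_completeHomogeneous ht 1).eq, hxt, completeHomogeneous_zero_right]
    noncomm_ring
  | succ m ih =>
    obtain ⟨g, hg⟩ := ih
    refine ⟨completeHomogeneous x k (m + 2) + g * x (k + 2), ?_⟩
    rw [completeHomogeneous_succ_succ, add_mul, ← (commute_completeHomogeneous ht _).eq, mul_assoc,
      hxt, mul_add, ← mul_assoc, hg, completeHomogeneous_succ_succ x (k + 1) m]
    noncomm_ring

end CompleteHomogeneous

section RightIdeal

variable {A : Type*} [Ring A]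

open MulOpposite Submodule

lemma completeHomogeneous_mem_span {n : ℕ} {x τ : ℕ → A}
    (hτxfar : ∀ k j, 1 ≤ k → k ≤ n - 1 → 1 ≤ j → j ≤ n → j ≠ k → j ≠ k + 1 →
      τ k * x j = x j * τ k)
    (hτx' : ∀ k, 1 ≤ k → k ≤ n - 1 → τ k * x (k + 1) = x k * τ k - 1)
    (k m : ℕ) (hkn : k + 1 ≤ n) (hx : x 1 ^ (m + k) = 0) :
    completeHomogeneous x (k + 1) m ∈ span Aᵐᵒᵖ (τ '' Set.Icc 1 k) := by
  induction k generalizing m with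
  | zero => rw [completeHomogeneous_one, ← add_zero m, hx]; exact zero_mem _
  | succ k ih =>
    have hmem := ih (m + 1) (by omega) (by rwa [add_right_comm])
    obtain ⟨g, hg⟩ := exists_completeHomogeneous_mul_eq (k := k)
      (fun i hi hik ↦ hτxfar (k + 1) i (by omega) (by omega) hi (by omega) (by omega) (by omega))
      (by rw [hτx' (k + 1) (by omega) (by omega), sub_add_cancel]) m
    have hsplit : completeHomogeneous x (k + 2) m =
        op (τ (k + 1)) • completeHomogeneous x (k + 1) (m + 1) - op g • τ (k + 1) := by
      rw [op_smul_eq_mul, op_smul_eq_mul, hg]; abel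
    rw [hsplit]
    refine sub_mem (smul_mem _ _ (span_mono ?_ hmem)) (smul_mem _ _ (subset_span ⟨k + 1, ?_, rfl⟩))
    · exact Set.image_mono (Set.Icc_subset_Icc_right (by omega))
    · exact ⟨by omega, le_rfl⟩

lemma mul_eq_zero_of_mem_span {p a : A} {S : Set A} (hS : ∀ s ∈ S, p * s = 0)
    (ha : a ∈ span Aᵐᵒᵖ S) : p * a = 0 := by
  induction ha using span_induction with
  | mem s hs => exact hS s hs
  | zero => exact mul_zero p
  | add a b _ _ ha hb => rw [mul_add, ha, hb, add_zero]
  | smul r a _ ha => rw [smul_eq_mul_unop, ← mul_assoc, ha, zero_mul]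

lemma one_eq_zero_of_one_mem_span_of_prod_eq_zero {τ : ℕ → A} {S : Set ℕ} {N : ℕ}
    (h1 : (1 : A) ∈ span Aᵐᵒᵖ (τ '' S))
    (hw : ∀ w : List ℕ, (∀ j ∈ w, j ∈ S) → N ≤ w.length → (w.map τ).prod = 0) :
    (1 : A) = 0 := by
  suffices ∀ i (w : List ℕ), (∀ j ∈ w, j ∈ S) → N ≤ w.length + i → (w.map τ).prod = 0 by
    simpa using this N [] (by simp) (by simp)
  intro i
  induction i with
  | zero => exact hw
  | succ i ih =>
    intro w hwS hlen
    have hτ : ∀ s ∈ τ '' S, (w.map τ).prod * s = 0 := by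
      rintro _ ⟨j, hj, rfl⟩
      simpa using ih (w ++ [j]) (by simpa [or_imp, forall_and] using ⟨hwS, hj⟩)
        (by simp; omega)
    simpa using mul_eq_zero_of_mem_span hτ h1

end RightIdeal

theorem stmt4_general (A : Type*) [Ring A] (n ℓ : ℕ) (hnℓ : ℓ + 1 ≤ n)
    (x τ : ℕ → A)
    (hτsq : ∀ k, 1 ≤ k → k ≤ n - 1 → τ k ^ 2 = 0)
    (hbraid : ∀ k, 1 ≤ k → k + 1 ≤ n - 1 →
      τ k * τ (k + 1) * τ k = τ (k + 1) * τ k * τ (k + 1))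
    (hdist : ∀ k l, 1 ≤ k → k ≤ n - 1 → 1 ≤ l → l ≤ n - 1 →
      (k + 2 ≤ l ∨ l + 2 ≤ k) → τ k * τ l = τ l * τ k)
    (hτxfar : ∀ k j, 1 ≤ k → k ≤ n - 1 → 1 ≤ j → j ≤ n → j ≠ k → j ≠ k + 1 →
      τ k * x j = x j * τ k)
    (hτx' : ∀ k, 1 ≤ k → k ≤ n - 1 → τ k * x (k + 1) = x k * τ k - 1)
    (hx : x 1 ^ ℓ = 0) :
    (1 : A) = 0 := by
  have hrel : NilCoxeterRelations τ (n - 1) := ⟨hτsq, hbraid, hdist⟩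
  have h1 : (1 : A) ∈ Submodule.span Aᵐᵒᵖ (τ '' Set.Icc 1 ℓ) := by
    simpa using completeHomogeneous_mem_span hτxfar hτx' ℓ 0 hnℓ (by rwa [zero_add])
  exact one_eq_zero_of_one_mem_span_of_prod_eq_zero (N := ℓ * (ℓ + 1) + 1) h1
    fun w hw hlen ↦ hrel.prod_eq_zero_of_lt_length (by omega) w hw (by omega)

/-- The fact `R^λ(mi) = 0` for a real index `i` and `m ≥ λ(h_i) + 1`, used in
Lemma 3.4(i) of the paper: a ring carrying the defining relations of the
nilHecke algebra on `n` strands (the quiver Hecke algebra `R(ni)` for a real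
index `i`) in which moreover `x 1 ^ ℓ = 0` with `n ≥ ℓ + 1` must be the zero
ring. -/
theorem stmt4 (A : Type*) [Ring A] (n ℓ : ℕ) (hn : 1 ≤ n) (hnℓ : ℓ + 1 ≤ n)
    (x τ : ℕ → A)
    (hcomm : ∀ j k, 1 ≤ j → j ≤ n → 1 ≤ k → k ≤ n → x j * x k = x k * x j)
    (hτsq : ∀ k, 1 ≤ k → k ≤ n - 1 → τ k ^ 2 = 0)
    (hbraid : ∀ k, 1 ≤ k → k + 1 ≤ n - 1 →
      τ k * τ (k + 1) * τ k = τ (k + 1) * τ k * τ (k + 1))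
    (hdist : ∀ k l, 1 ≤ k → k ≤ n - 1 → 1 ≤ l → l ≤ n - 1 →
      (k + 2 ≤ l ∨ l + 2 ≤ k) → τ k * τ l = τ l * τ k)
    (hτxfar : ∀ k j, 1 ≤ k → k ≤ n - 1 → 1 ≤ j → j ≤ n → j ≠ k → j ≠ k + 1 →
      τ k * x j = x j * τ k)
    (hτx : ∀ k, 1 ≤ k → k ≤ n - 1 → τ k * x k = x (k + 1) * τ k + 1)
    (hτx' : ∀ k, 1 ≤ k → k ≤ n - 1 → τ k * x (k + 1) = x k * τ k - 1)
    (hx : x 1 ^ ℓ = 0) :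
    (1 : A) = 0 :=
  stmt4_general A n ℓ hnℓ x τ hτsq hbraid hdist hτxfar hτx' hx
end

section
/- The operators U_k satisfy the nilCoxeter relations: U_k ∘ U_k = 0 for all 1 ≤ k ≤ n−1; U_k ∘ U_{k+1} ∘ U_k = U_{k+1} ∘ U_k ∘ U_{k+1} for all 1 ≤ k ≤ n−2; and U_k ∘ U_l = U_l ∘ U_k whenever |k − l| ≥ 2. -/
open scoped Classical

noncomputable section

/-- The Coxeter length of a permutation of `Fin n`: its number of inversions. -/
def permLen {n : ℕ} (w : Equiv.Perm (Fin n)) : ℕ :=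
  (Finset.univ.filter fun p : Fin n × Fin n => p.1 < p.2 ∧ w p.2 < w p.1).card

/-- The partial sums (block offsets) of a composition `μ`. -/
def off (μ : ℕ → ℕ) (t : ℕ) : ℕ := ∑ s ∈ Finset.range t, μ s

/-- `p` and `q` lie in the same (consecutive) block of the composition
`(μ 0, …, μ (r-1))`. -/
def sameBlock (r : ℕ) (μ : ℕ → ℕ) (p q : ℕ) : Prop :=
  ∃ t < r, off μ t ≤ p ∧ p < off μ (t + 1) ∧ off μ t ≤ q ∧ q < off μ (t + 1)

/-- The set `D_μ` of minimal-length representatives of the left cosets `u • S_μ`: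
permutations increasing on each block of `μ`. -/
def Dmu (n r : ℕ) (μ : ℕ → ℕ) : Set (Equiv.Perm (Fin n)) :=
  {u | ∀ p q : Fin n, p < q → sameBlock r μ (p : ℕ) (q : ℕ) → u p < u q}

/-- The adjacent transposition `s_k = (k, k+1)` (0-indexed), as a permutation
of `Fin n` (junk value `1` if out of range). -/
def adjSwap (n k : ℕ) : Equiv.Perm (Fin n) :=
  if h : k + 1 < n then Equiv.swap ⟨k, Nat.lt_of_succ_lt h⟩ ⟨k + 1, h⟩ else 1

/-- The index type for the basis `{e_u : u ∈ D_μ}` of the vector space `V`. -/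
abbrev DmuSub (n r : ℕ) (μ : ℕ → ℕ) : Type := {u : Equiv.Perm (Fin n) // u ∈ Dmu n r μ}

/-- The defining property of the family of `K`-linear operators
`U_k : V → V` on `V = (DmuSub n r μ → K)`:
`U_k (e_u) = e_{s_k u}` if `ℓ(s_k u) = ℓ(u) + 1` and `s_k u ∈ D_μ`, and
`U_k (e_u) = 0` otherwise (here `e_u = Pi.single u 1`). -/
def IsUFamily (K : Type*) [Field K] (n r : ℕ) (μ : ℕ → ℕ)
    (U : ℕ → ((DmuSub n r μ → K) →ₗ[K] (DmuSub n r μ → K))) : Prop :=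
  ∀ k, k + 1 < n → ∀ u : DmuSub n r μ,
    U k (Pi.single u (1 : K)) =
      if h : permLen (adjSwap n k * u.1) = permLen u.1 + 1 ∧
          adjSwap n k * u.1 ∈ Dmu n r μ
      then Pi.single (⟨adjSwap n k * u.1, h.2⟩ : DmuSub n r μ) (1 : K) else 0

/-!
Composites of the `U_k` are governed by words: for `u ∈ D_μ`, the operator `U_{k_m} ⋯ U_{k_1}`
sends `e_u` to `e_w`, `w = s_{k_m} ⋯ s_{k_1} u`, when `ℓ(w) = ℓ(u) + m` and `w ∈ D_μ`, and to `0`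
otherwise. Indeed, a left multiplication by the swap of two adjacent values that raises the
length adds one inversion and keeps all others, so along a length-additive chain the inversion
sets (of positions) grow; as `D_μ` consists of the permutations without inversions inside a
block, `w ∈ D_μ` forces every intermediate permutation into `D_μ`. Hence a composite depends only
on the product and the length of its word, and the nilCoxeter relations follow from the Coxeter
relations of `S_n`: for `s_k s_k = 1` the required length `ℓ(u) + 2` is never reached.
-/

open Equiv

theorem CovBy.swap_apply_lt_swap_apply_iff {α : Type*} [LinearOrder α] {a b : α} (hab : a ⋖ b)
    {x y : α} :
    swap a b x < swap a b y ↔ x < y ∧ ¬(x = a ∧ y = b) ∨ x = b ∧ y = a := by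
  have hlt := hab.lt
  have hup : ∀ c, a < c → b ≤ c := fun c => hab.ge_of_gt
  have hdown : ∀ c, c < b → c ≤ a := fun c => hab.le_of_lt
  simp only [swap_apply_def]
  split_ifs <;> grind

theorem Equiv.swap_mul_swap_mul_swap_braid {α : Type*} [DecidableEq α] {x y z : α}
    (hxy : x ≠ y) (hyz : y ≠ z) (hxz : x ≠ z) :
    swap x y * swap y z * swap x y = swap y z * swap x y * swap y z := by
  have hleft : swap y x * swap z y * swap y x = swap x z :=
    swap_mul_swap_mul_swap hyz.symm hxz.symm
  rw [swap_comm y x, swap_comm z y] at hleft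
  rw [hleft, swap_mul_swap_mul_swap hxy hxz, swap_comm]

namespace Equiv.Perm

variable {α : Type*} [LinearOrder α] [Fintype α]

def inversions (w : Perm α) : Finset (α × α) :=
  Finset.univ.filter fun p => p.1 < p.2 ∧ w p.2 < w p.1

theorem mem_inversions {w : Perm α} {p : α × α} :
    p ∈ inversions w ↔ p.1 < p.2 ∧ w p.2 < w p.1 := by
  simp [inversions]

variable {a b : α}

theorem inversions_swap_mul_of_lt (hab : a ⋖ b) (w : Perm α) (h : w⁻¹ a < w⁻¹ b) :
    inversions (swap a b * w) = insert (w⁻¹ a, w⁻¹ b) (inversions w) := by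
  ext ⟨p, q⟩
  simp only [Finset.mem_insert, mem_inversions, Perm.mul_apply, Prod.mk.injEq,
    hab.swap_apply_lt_swap_apply_iff, ← Perm.eq_inv_iff_eq]
  grind

theorem card_inversions_swap_mul_of_lt (hab : a ⋖ b) (w : Perm α) (h : w⁻¹ a < w⁻¹ b) :
    (inversions (swap a b * w)).card = (inversions w).card + 1 := by
  rw [inversions_swap_mul_of_lt hab w h, Finset.card_insert_of_notMem]
  simp [mem_inversions, hab.lt.not_gt]

theorem card_inversions_swap_mul_of_gt (hab : a ⋖ b) (w : Perm α) (h : w⁻¹ b < w⁻¹ a) :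
    (inversions w).card = (inversions (swap a b * w)).card + 1 := by
  have h' : (swap a b * w)⁻¹ a < (swap a b * w)⁻¹ b := by
    simpa [mul_inv_rev, swap_inv] using h
  simpa [← mul_assoc] using card_inversions_swap_mul_of_lt hab _ h'

theorem card_inversions_swap_mul_le (hab : a ⋖ b) (w : Perm α) :
    (inversions (swap a b * w)).card ≤ (inversions w).card + 1 := by
  rcases lt_trichotomy (w⁻¹ a) (w⁻¹ b) with h | h | h
  · exact (card_inversions_swap_mul_of_lt hab w h).le
  · exact absurd (w⁻¹.injective h) hab.lt.ne
  · have := card_inversions_swap_mul_of_gt hab w h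
    omega

theorem inversions_subset_swap_mul (hab : a ⋖ b) (w : Perm α)
    (h : (inversions (swap a b * w)).card = (inversions w).card + 1) :
    inversions w ⊆ inversions (swap a b * w) := by
  rcases lt_trichotomy (w⁻¹ a) (w⁻¹ b) with hw | hw | hw
  · rw [inversions_swap_mul_of_lt hab w hw]
    exact Finset.subset_insert _ _
  · exact absurd (w⁻¹.injective hw) hab.lt.ne
  · have := card_inversions_swap_mul_of_gt hab w hw
    omega

end Equiv.Perm

open Equiv.Perm

theorem permLen_eq_card_inversions {n : ℕ} (w : Perm (Fin n)) :
    permLen w = (inversions w).card := rfl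

theorem Fin.mk_covBy_mk_add_one {n k : ℕ} (hk : k + 1 < n) :
    (⟨k, Nat.lt_of_succ_lt hk⟩ : Fin n) ⋖ ⟨k + 1, hk⟩ := by
  simp

theorem adjSwap_eq_swap {n k : ℕ} (hk : k + 1 < n) :
    adjSwap n k = swap ⟨k, Nat.lt_of_succ_lt hk⟩ ⟨k + 1, hk⟩ := dif_pos hk

theorem adjSwap_of_le {n k : ℕ} (hk : n ≤ k + 1) : adjSwap n k = 1 := dif_neg hk.not_gt

theorem adjSwap_mul_self (n k : ℕ) : adjSwap n k * adjSwap n k = 1 := by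
  unfold adjSwap
  split_ifs
  · exact swap_mul_self _ _
  · exact one_mul 1

theorem adjSwap_braid {n k : ℕ} (hk : k + 2 < n) :
    adjSwap n k * adjSwap n (k + 1) * adjSwap n k =
      adjSwap n (k + 1) * adjSwap n k * adjSwap n (k + 1) := by
  rw [adjSwap_eq_swap (by omega : k + 1 < n), adjSwap_eq_swap (by omega : k + 1 + 1 < n)]
  exact swap_mul_swap_mul_swap_braid (Fin.ne_of_lt (by simp)) (Fin.ne_of_lt (by simp))
    (Fin.ne_of_lt (by simp))

theorem adjSwap_mul_comm {n k l : ℕ} (hkl : k + 2 ≤ l) :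
    adjSwap n k * adjSwap n l = adjSwap n l * adjSwap n k := by
  by_cases hl : l + 1 < n
  · rw [adjSwap_eq_swap (by omega : k + 1 < n), adjSwap_eq_swap hl]
    exact (disjoint_swap_swap (by simp [Fin.ext_iff]; omega)).commute.eq
  · rw [adjSwap_of_le (by omega : n ≤ l + 1), one_mul, mul_one]

theorem permLen_adjSwap_mul_le (n k : ℕ) (w : Perm (Fin n)) :
    permLen (adjSwap n k * w) ≤ permLen w + 1 := by
  simp only [permLen_eq_card_inversions]
  rcases lt_or_ge k (n - 1) with hk | hk
  · rw [adjSwap_eq_swap (by omega)]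
    exact card_inversions_swap_mul_le (Fin.mk_covBy_mk_add_one _) w
  · rw [adjSwap_of_le (by omega), one_mul]
    omega

theorem inversions_subset_adjSwap_mul {n k : ℕ} {w : Perm (Fin n)}
    (h : permLen (adjSwap n k * w) = permLen w + 1) :
    inversions w ⊆ inversions (adjSwap n k * w) := by
  simp only [permLen_eq_card_inversions] at h
  rcases lt_or_ge k (n - 1) with hk | hk
  · rw [adjSwap_eq_swap (by omega)] at h ⊢
    exact inversions_subset_swap_mul (Fin.mk_covBy_mk_add_one _) w h
  · rw [adjSwap_of_le (by omega), one_mul] at h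
    omega

theorem mem_Dmu_of_inversions_subset {n r : ℕ} {μ : ℕ → ℕ} {u v : Perm (Fin n)}
    (huv : inversions u ⊆ inversions v) (hv : v ∈ Dmu n r μ) : u ∈ Dmu n r μ := by
  intro p q hpq hpq_block
  by_contra hu
  have hinv : (p, q) ∈ inversions u :=
    mem_inversions.2 ⟨hpq, (not_lt.1 hu).lt_of_ne (u.injective.ne hpq.ne')⟩
  exact (mem_inversions.1 (huv hinv)).2.not_gt (hv p q hpq hpq_block)

theorem mem_Dmu_of_adjSwap_mul {n r k : ℕ} {μ : ℕ → ℕ} {w : Perm (Fin n)}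
    (h : permLen (adjSwap n k * w) = permLen w + 1) (hw : adjSwap n k * w ∈ Dmu n r μ) :
    w ∈ Dmu n r μ :=
  mem_Dmu_of_inversions_subset (inversions_subset_adjSwap_mul h) hw

theorem permLen_prod_map_adjSwap_mul_le (n : ℕ) (ks : List ℕ) (w : Perm (Fin n)) :
    permLen ((ks.map (adjSwap n)).prod * w) ≤ permLen w + ks.length := by
  induction ks with
  | nil => simp
  | cons k ks ih =>
    rw [List.map_cons, List.prod_cons, mul_assoc, List.length_cons]
    have := permLen_adjSwap_mul_le n k ((ks.map (adjSwap n)).prod * w)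
    omega

namespace IsUFamily

variable {K : Type*} [Field K] {n r : ℕ} {μ : ℕ → ℕ}
  {U : ℕ → ((DmuSub n r μ → K) →ₗ[K] (DmuSub n r μ → K))}

theorem apply_single (hU : IsUFamily K n r μ U) {k : ℕ} (hk : k + 1 < n) (u : DmuSub n r μ)
    (c : K) :
    U k (Pi.single u c) =
      if h : permLen (adjSwap n k * u.1) = permLen u.1 + 1 ∧ adjSwap n k * u.1 ∈ Dmu n r μ
      then Pi.single (⟨adjSwap n k * u.1, h.2⟩ : DmuSub n r μ) c else 0 := by
  have hsingle : ∀ v : DmuSub n r μ, Pi.single v c = c • Pi.single v (1 : K) := fun v => by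
    rw [← Pi.single_smul', smul_eq_mul, mul_one]
  rw [hsingle, map_smul, hU k hk u]
  split_ifs
  · exact (hsingle _).symm
  · exact smul_zero c

theorem apply_dite (hU : IsUFamily K n r μ U) {k : ℕ} (hk : k + 1 < n) {w : Perm (Fin n)}
    {N : ℕ} (hw : permLen w ≤ N) (c : K) :
    U k (if h : permLen w = N ∧ w ∈ Dmu n r μ
      then Pi.single (⟨w, h.2⟩ : DmuSub n r μ) c else 0) =
      if h : permLen (adjSwap n k * w) = N + 1 ∧ adjSwap n k * w ∈ Dmu n r μ
      then Pi.single (⟨adjSwap n k * w, h.2⟩ : DmuSub n r μ) c else 0 := by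
  by_cases hwN : permLen w = N ∧ w ∈ Dmu n r μ
  · obtain ⟨rfl, hwD⟩ := hwN
    rw [dif_pos ⟨rfl, hwD⟩, hU.apply_single hk]
  · rw [dif_neg hwN, map_zero, dif_neg]
    rintro ⟨hlen, hD⟩
    have := permLen_adjSwap_mul_le n k w
    exact hwN ⟨by omega, mem_Dmu_of_adjSwap_mul (by omega) hD⟩

theorem prod_map_apply_single (hU : IsUFamily K n r μ U) {ks : List ℕ}
    (hks : ∀ k ∈ ks, k + 1 < n) (u : DmuSub n r μ) (c : K) :
    (ks.map U).prod (Pi.single u c) =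
      if h : permLen ((ks.map (adjSwap n)).prod * u.1) = permLen u.1 + ks.length ∧
        (ks.map (adjSwap n)).prod * u.1 ∈ Dmu n r μ
      then Pi.single (⟨(ks.map (adjSwap n)).prod * u.1, h.2⟩ : DmuSub n r μ) c else 0 := by
  induction ks with
  | nil => simp [u.2]
  | cons k ks ih =>
    simp only [List.mem_cons, forall_eq_or_imp] at hks
    rw [List.map_cons, List.prod_cons, Module.End.mul_apply, ih hks.2,
      hU.apply_dite hks.1 (permLen_prod_map_adjSwap_mul_le n ks u.1)]
    simp only [List.map_cons, List.prod_cons, List.length_cons, mul_assoc, add_assoc]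

theorem prod_map_eq (hU : IsUFamily K n r μ U) {ks ls : List ℕ} (hks : ∀ k ∈ ks, k + 1 < n)
    (hls : ∀ l ∈ ls, l + 1 < n)
    (hprod : (ks.map (adjSwap n)).prod = (ls.map (adjSwap n)).prod)
    (hlen : ks.length = ls.length) :
    (ks.map U).prod = (ls.map U).prod :=
  LinearMap.pi_ext fun u c => by
    rw [hU.prod_map_apply_single hks, hU.prod_map_apply_single hls, hprod, hlen]

theorem comp_self (hU : IsUFamily K n r μ U) {k : ℕ} (hk : k + 1 < n) :
    (U k).comp (U k) = 0 := by
  refine LinearMap.pi_ext fun u c => ?_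
  have := hU.prod_map_apply_single (ks := [k, k]) (by simpa using hk) u c
  simp only [List.map_cons, List.map_nil, List.prod_cons, List.prod_nil, mul_one,
    adjSwap_mul_self, one_mul, List.length_cons, List.length_nil] at this
  rw [LinearMap.zero_apply, ← Module.End.mul_eq_comp, this, dif_neg (by omega)]

theorem braid (hU : IsUFamily K n r μ U) {k : ℕ} (hk : k + 2 < n) :
    (U k).comp ((U (k + 1)).comp (U k)) = (U (k + 1)).comp ((U k).comp (U (k + 1))) := by
  have := hU.prod_map_eq (ks := [k, k + 1, k]) (ls := [k + 1, k, k + 1])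
    (by simp; omega) (by simp; omega) (by simpa [mul_assoc] using adjSwap_braid hk) rfl
  simpa [Module.End.mul_eq_comp] using this

theorem comp_comm (hU : IsUFamily K n r μ U) {k l : ℕ} (hk : k + 1 < n) (hl : l + 1 < n)
    (hkl : k + 2 ≤ l ∨ l + 2 ≤ k) : (U k).comp (U l) = (U l).comp (U k) := by
  have hswap : adjSwap n k * adjSwap n l = adjSwap n l * adjSwap n k := by
    rcases hkl with hkl | hlk
    · exact adjSwap_mul_comm hkl
    · exact (adjSwap_mul_comm hlk).symm
  have := hU.prod_map_eq (ks := [k, l]) (ls := [l, k])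
    (by simp [hk, hl]) (by simp [hk, hl]) (by simpa using hswap) rfl
  simpa [Module.End.mul_eq_comp] using this

end IsUFamily

theorem stmt9_general (K : Type*) [Field K] {n r : ℕ} (μ : ℕ → ℕ)
    (U : ℕ → ((DmuSub n r μ → K) →ₗ[K] (DmuSub n r μ → K)))
    (hU : IsUFamily K n r μ U) :
    (∀ k, k + 1 < n → (U k).comp (U k) = 0) ∧
    (∀ k, k + 2 < n →
      (U k).comp ((U (k + 1)).comp (U k)) = (U (k + 1)).comp ((U k).comp (U (k + 1)))) ∧
    (∀ k l, k + 1 < n → l + 1 < n → (k + 2 ≤ l ∨ l + 2 ≤ k) →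
      (U k).comp (U l) = (U l).comp (U k)) :=
  ⟨fun _ hk => hU.comp_self hk, fun _ hk => hU.braid hk,
    fun _ _ hk hl hkl => hU.comp_comm hk hl hkl⟩

/-- the operators `U_k` satisfy the nilCoxeter relations
(so `V` realizes `Ind^{ni}_{μi} V(i^μ)` over the quiver Hecke algebra `R(ni)`
attached to an imaginary index `i`, as in Lemma 1.3 of the paper). -/
theorem stmt9 (K : Type*) [Field K] {n r : ℕ} (hn : 1 ≤ n) (μ : ℕ → ℕ)
    (hpos : ∀ t < r, 1 ≤ μ t) (hsum : off μ r = n)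
    (U : ℕ → ((DmuSub n r μ → K) →ₗ[K] (DmuSub n r μ → K)))
    (hU : IsUFamily K n r μ U) :
    (∀ k, k + 1 < n → (U k).comp (U k) = 0) ∧
    (∀ k, k + 2 < n →
      (U k).comp ((U (k + 1)).comp (U k)) = (U (k + 1)).comp ((U k).comp (U (k + 1)))) ∧
    (∀ k l, k + 1 < n → l + 1 < n → (k + 2 ≤ l ∨ l + 2 ≤ k) →
      (U k).comp (U l) = (U l).comp (U k)) :=
  stmt9_general K μ U hU
end
end

section
/- Let λ be the unique longest element of D_μ. Then U_k(e_λ) = 0 for every 1 ≤ k ≤ n−1, so the line K·e_λ is invariant; and every nonzero invariant subspace of V contains K·e_λ. Hence K·e_λ is the unique minimal nonzero invariant subspace (the socle) of V, and all the operators U_k act on it by 0 (it is a trivial module). -/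
open scoped Classical

noncomputable section

/-! If `u ∈ D_μ` has no ascent inside `D_μ`, then for consecutive values `k, k + 1` the
positions `u⁻¹ k, u⁻¹ (k + 1)` are either decreasing or in one block, so following the values
upwards one never crosses a block boundary forwards: `u` sends every later block below every
earlier one. With monotonicity on blocks this fixes the relative order of all values of `u`,
so there is only one such `u`, namely `λ`. Hence every `u ≠ λ` has an ascent `k`; `U_k` lifts
the support of a vector by exactly one length level and keeps the coordinate of `u`, so
iterating inside a nonzero invariant `W` pushes a nonzero vector up to a multiple of `e_λ`. -/

open Equiv

lemma Equiv.Perm.eq_of_forall_apply_lt_apply_iff {α : Type*} [LinearOrder α] [Finite α]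
    {u w : Perm α} (h : ∀ p q, u p < u q ↔ w p < w q) : u = w := by
  have hmono : StrictMono (w ∘ ⇑u⁻¹) := fun x y hxy => by
    simpa [← h] using hxy
  ext p
  simpa using (hmono.apply_eq (x := u p)).symm

lemma off_mono (μ : ℕ → ℕ) : Monotone (off μ) := fun _ _ hab =>
  Finset.sum_le_sum_of_subset (Finset.range_subset_range.2 hab)

lemma exists_block_of_lt_off {μ : ℕ → ℕ} {r p : ℕ} (hp : p < off μ r) :
    ∃ t < r, off μ t ≤ p ∧ p < off μ (t + 1) := by
  induction r with
  | zero => simp [off] at hp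
  | succ r ih =>
    by_cases h : p < off μ r
    · obtain ⟨t, ht, hpt⟩ := ih h
      exact ⟨t, by omega, hpt⟩
    · exact ⟨r, lt_add_one r, not_lt.1 h, hp⟩

lemma sameBlock.symm {r : ℕ} {μ : ℕ → ℕ} {p q : ℕ} (h : sameBlock r μ p q) :
    sameBlock r μ q p := by
  obtain ⟨t, ht, h1, h2, h3, h4⟩ := h
  exact ⟨t, ht, h3, h4, h1, h2⟩

def BlockLT (μ : ℕ → ℕ) (p q : ℕ) : Prop := ∃ t, p < off μ t ∧ off μ t ≤ q

lemma BlockLT.lt {μ : ℕ → ℕ} {p q : ℕ} (h : BlockLT μ p q) : p < q := by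
  obtain ⟨t, h1, h2⟩ := h
  omega

lemma not_blockLT_trans {μ : ℕ → ℕ} {a b c : ℕ} (hab : ¬BlockLT μ a b)
    (hbc : ¬BlockLT μ b c) : ¬BlockLT μ a c := by
  rintro ⟨t, h1, h2⟩
  by_cases hb : b < off μ t
  · exact hbc ⟨t, hb, h2⟩
  · exact hab ⟨t, h1, not_lt.1 hb⟩

lemma sameBlock.not_blockLT {r : ℕ} {μ : ℕ → ℕ} {p q : ℕ} (h : sameBlock r μ p q) :
    ¬BlockLT μ p q := by
  obtain ⟨t, -, h1, -, -, h4⟩ := h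
  rintro ⟨s, h5, h6⟩
  have hts : t < s := lt_of_not_ge fun hle => by have := off_mono μ hle; omega
  have hst : s < t + 1 := lt_of_not_ge fun hle => by have := off_mono μ hle; omega
  omega

lemma blockLT_of_not_sameBlock {r : ℕ} {μ : ℕ → ℕ} {p q : ℕ} (hq : q < off μ r)
    (hpq : p < q) (h : ¬sameBlock r μ p q) : BlockLT μ p q := by
  obtain ⟨t, ht, h1, h2⟩ := exists_block_of_lt_off (hpq.trans hq)
  exact ⟨t + 1, h2, not_lt.1 fun h3 => h ⟨t, ht, h1, h2, by omega, h3⟩⟩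

lemma adjSwap_apply_val {n k : ℕ} (hk : k + 1 < n) (x : Fin n) :
    (adjSwap n k x : ℕ) = if (x : ℕ) = k then k + 1 else if (x : ℕ) = k + 1 then k else x := by
  rw [adjSwap, dif_pos hk, Equiv.swap_apply_def]
  split_ifs <;> simp_all [Fin.ext_iff]

lemma permLen_adjSwap_mul {n k : ℕ} (hk : k + 1 < n) (u : Perm (Fin n))
    (hlt : u⁻¹ ⟨k, by omega⟩ < u⁻¹ ⟨k + 1, hk⟩) :
    permLen (adjSwap n k * u) = permLen u + 1 := by
  set a := u⁻¹ ⟨k, by omega⟩ with ha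
  set b := u⁻¹ ⟨k + 1, hk⟩ with hb
  have hpa : ∀ p, p = a ↔ (u p : ℕ) = k := fun p => by
    rw [ha, Perm.eq_inv_iff_eq, Fin.ext_iff]
  have hpb : ∀ p, p = b ↔ (u p : ℕ) = k + 1 := fun p => by
    rw [hb, Perm.eq_inv_iff_eq, Fin.ext_iff]
  have hset : (Finset.univ.filter fun p : Fin n × Fin n =>
      p.1 < p.2 ∧ (adjSwap n k * u) p.2 < (adjSwap n k * u) p.1) =
      insert (a, b) (Finset.univ.filter fun p : Fin n × Fin n => p.1 < p.2 ∧ u p.2 < u p.1) := by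
    ext ⟨p, q⟩
    have hab : (p = a ∧ q = b → p < q) ∧ (p = b ∧ q = a → q < p) :=
      ⟨by rintro ⟨rfl, rfl⟩; exact hlt, by rintro ⟨rfl, rfl⟩; exact hlt⟩
    have hinj : p < q → (u p : ℕ) ≠ u q := fun h he => h.ne (u.injective (Fin.ext he))
    simp only [Finset.mem_insert, Finset.mem_filter, Finset.mem_univ, true_and, Prod.mk.injEq,
      Perm.mul_apply, Fin.lt_def, adjSwap_apply_val hk, hpa, hpb] at hab hinj ⊢
    split_ifs <;> omega
  rw [permLen, hset, Finset.card_insert_of_notMem, permLen]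
  simp only [Finset.mem_filter, Finset.mem_univ, true_and, Fin.lt_def,
    (hpa a).1 rfl, (hpb b).1 rfl]
  omega

lemma adjSwap_mul_mem_Dmu {n r k : ℕ} {μ : ℕ → ℕ} (hk : k + 1 < n) {u : Perm (Fin n)}
    (hu : u ∈ Dmu n r μ)
    (hb : ¬sameBlock r μ (u⁻¹ ⟨k, by omega⟩ : Fin n) (u⁻¹ ⟨k + 1, hk⟩ : Fin n)) :
    adjSwap n k * u ∈ Dmu n r μ := by
  intro p q hpq hpqb
  have hlt : (u p : ℕ) < u q := hu p q hpq hpqb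
  have hne : ¬((u p : ℕ) = k ∧ (u q : ℕ) = k + 1) := by
    rintro ⟨hp, hq⟩
    rw [show p = u⁻¹ ⟨k, by omega⟩ from Perm.eq_inv_iff_eq.2 (Fin.ext hp),
      show q = u⁻¹ ⟨k + 1, hk⟩ from Perm.eq_inv_iff_eq.2 (Fin.ext hq)] at hpqb
    exact hb hpqb
  rw [Fin.lt_def, Perm.mul_apply, Perm.mul_apply, adjSwap_apply_val hk,
    adjSwap_apply_val hk]
  split_ifs <;> omega

def IsDmuAscent (n r : ℕ) (μ : ℕ → ℕ) (k : ℕ) (u : Perm (Fin n)) : Prop :=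
  permLen (adjSwap n k * u) = permLen u + 1 ∧ adjSwap n k * u ∈ Dmu n r μ

lemma not_isDmuAscent_of_forall_permLen_lt {n r k : ℕ} {μ : ℕ → ℕ} {lam : Perm (Fin n)}
    (hmax : ∀ u ∈ Dmu n r μ, u ≠ lam → permLen u < permLen lam) : ¬IsDmuAscent n r μ k lam := by
  rintro ⟨hlen, hmem⟩
  have hne : adjSwap n k * lam ≠ lam := fun he => by
    rw [he] at hlen
    omega
  have := hmax _ hmem hne
  omega

lemma not_blockLT_of_forall_not_isDmuAscent {n r : ℕ} {μ : ℕ → ℕ} {u : Perm (Fin n)}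
    (hu : u ∈ Dmu n r μ) (hno : ∀ k, k + 1 < n → ¬IsDmuAscent n r μ k u) {x y : Fin n}
    (hxy : x ≤ y) : ¬BlockLT μ (u⁻¹ x : Fin n) (u⁻¹ y : Fin n) := by
  obtain ⟨x, hx⟩ := x
  obtain ⟨y, hy⟩ := y
  induction y, (Fin.mk_le_mk.1 hxy : x ≤ y) using Nat.le_induction with
  | base => exact fun h => h.lt.false
  | succ k _ ih =>
    refine not_blockLT_trans (ih (by omega) (Fin.mk_le_mk.2 (by omega))) fun hlt => ?_
    have hb : sameBlock r μ (u⁻¹ ⟨k, by omega⟩ : Fin n) (u⁻¹ ⟨k + 1, hy⟩ : Fin n) :=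
      by_contra fun hb => hno k hy
        ⟨permLen_adjSwap_mul hy u (Fin.lt_def.2 hlt.lt), adjSwap_mul_mem_Dmu hy hu hb⟩
    exact hb.not_blockLT hlt

lemma apply_lt_apply_of_blockLT {n r : ℕ} {μ : ℕ → ℕ} {u : Perm (Fin n)}
    (hu : u ∈ Dmu n r μ) (hno : ∀ k, k + 1 < n → ¬IsDmuAscent n r μ k u) {p q : Fin n}
    (h : BlockLT μ p q) : u q < u p := by
  by_contra hle
  have := not_blockLT_of_forall_not_isDmuAscent hu hno (not_lt.1 hle)
  simp only [Perm.coe_inv, Equiv.symm_apply_apply] at this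
  exact this h

lemma apply_lt_apply_iff_of_forall_not_isDmuAscent {n r : ℕ} {μ : ℕ → ℕ} (hsum : off μ r = n)
    {u : Perm (Fin n)} (hu : u ∈ Dmu n r μ) (hno : ∀ k, k + 1 < n → ¬IsDmuAscent n r μ k u)
    (p q : Fin n) : u p < u q ↔ sameBlock r μ p q ∧ p < q ∨ BlockLT μ q p := by
  rcases lt_trichotomy p q with hpq | rfl | hqp
  · have hqp : ¬BlockLT μ q p := fun h => h.lt.not_gt (Fin.lt_def.1 hpq)
    by_cases hb : sameBlock r μ p q
    · simp [hu p q hpq hb, hb, hpq, hqp]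
    · have hsep := blockLT_of_not_sameBlock (hsum ▸ q.isLt) hpq hb
      simp [hb, (apply_lt_apply_of_blockLT hu hno hsep).not_gt, hqp]
  · simpa using fun h : BlockLT μ p p => h.lt.false
  · by_cases hb : sameBlock r μ p q
    · simp [(hu q p hqp hb.symm).not_gt, hqp.not_gt, hb.symm.not_blockLT]
    · have hsep := blockLT_of_not_sameBlock (hsum ▸ p.isLt) hqp fun h => hb h.symm
      simp [apply_lt_apply_of_blockLT hu hno hsep, hsep]

lemma eq_of_forall_not_isDmuAscent {n r : ℕ} {μ : ℕ → ℕ} (hsum : off μ r = n)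
    {u w : Perm (Fin n)} (hu : u ∈ Dmu n r μ) (hw : w ∈ Dmu n r μ)
    (hnou : ∀ k, k + 1 < n → ¬IsDmuAscent n r μ k u)
    (hnow : ∀ k, k + 1 < n → ¬IsDmuAscent n r μ k w) : u = w :=
  Perm.eq_of_forall_apply_lt_apply_iff fun p q => by
    rw [apply_lt_apply_iff_of_forall_not_isDmuAscent hsum hu hnou,
      apply_lt_apply_iff_of_forall_not_isDmuAscent hsum hw hnow]

lemma single_one_mem_of_forall_ne_zero_eq {ι K : Type*} [Field K] [DecidableEq ι]
    {W : Submodule K (ι → K)} {v : ι → K} (hv : v ∈ W) (hv0 : v ≠ 0) {i : ι}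
    (hsupp : ∀ x, v x ≠ 0 → x = i) : Pi.single i 1 ∈ W := by
  obtain ⟨x, hx⟩ := Function.ne_iff.1 hv0
  have hi : v i ≠ 0 := hsupp x hx ▸ hx
  have hsingle : (v i)⁻¹ • v = Pi.single i 1 := by
    ext y
    by_cases hy : y = i
    · simp [hy, hi]
    · simp [hy, not_imp_comm.1 (hsupp y) hy]
  exact hsingle ▸ W.smul_mem _ hv

namespace IsUFamily

variable {K : Type*} [Field K] {n r : ℕ} {μ : ℕ → ℕ}
  {U : ℕ → ((DmuSub n r μ → K) →ₗ[K] (DmuSub n r μ → K))}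

lemma apply_single_of_not_isDmuAscent (hU : IsUFamily K n r μ U) {k : ℕ} (hk : k + 1 < n)
    {u : DmuSub n r μ} (h : ¬IsDmuAscent n r μ k u.1) : U k (Pi.single u 1) = 0 := by
  rw [hU k hk u]
  exact dif_neg h

lemma apply_single_apply (hU : IsUFamily K n r μ U) {k : ℕ} (hk : k + 1 < n)
    (u y : DmuSub n r μ) :
    U k (Pi.single u 1) y = if IsDmuAscent n r μ k u.1 ∧ y.1 = adjSwap n k * u.1 then 1 else 0 := by
  rw [hU k hk u]
  split_ifs with h h' h' <;> simp_all [IsDmuAscent, Pi.single_apply, Subtype.ext_iff]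

lemma apply_apply (hU : IsUFamily K n r μ U) {k : ℕ} (hk : k + 1 < n)
    (v : DmuSub n r μ → K) (y : DmuSub n r μ) :
    U k v y = ∑ u, v u * if IsDmuAscent n r μ k u.1 ∧ y.1 = adjSwap n k * u.1 then 1 else 0 := by
  conv_lhs => rw [pi_eq_sum_univ' v]
  simp only [map_sum, map_smul, Finset.sum_apply, Pi.smul_apply, smul_eq_mul,
    hU.apply_single_apply hk]

lemma apply_apply_adjSwap_mul (hU : IsUFamily K n r μ U) {k : ℕ} (hk : k + 1 < n)
    (v : DmuSub n r μ → K) {u : DmuSub n r μ} (h : IsDmuAscent n r μ k u.1) :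
    U k v ⟨adjSwap n k * u.1, h.2⟩ = v u := by
  rw [hU.apply_apply hk, Finset.sum_eq_single u]
  · simp [h]
  · intro w _ hwu
    have hne : u.1 ≠ w.1 := fun he => hwu (Subtype.ext he.symm)
    simp [hne]
  · simp

lemma exists_permLen_eq_succ_of_apply_ne_zero (hU : IsUFamily K n r μ U) {k : ℕ}
    (hk : k + 1 < n) {v : DmuSub n r μ → K} {y : DmuSub n r μ} (hy : U k v y ≠ 0) :
    ∃ u, v u ≠ 0 ∧ permLen y.1 = permLen u.1 + 1 := by
  rw [hU.apply_apply hk] at hy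
  obtain ⟨u, -, hu⟩ := Finset.exists_ne_zero_of_sum_ne_zero hy
  by_cases h : IsDmuAscent n r μ k u.1 ∧ y.1 = adjSwap n k * u.1
  · exact ⟨u, left_ne_zero_of_mul hu, h.2 ▸ h.1.1⟩
  · simp [h] at hu

lemma single_mem_of_ne_bot (hU : IsUFamily K n r μ U) {lam : Perm (Fin n)}
    (hlam : lam ∈ Dmu n r μ) (hmax : ∀ u ∈ Dmu n r μ, u ≠ lam → permLen u < permLen lam)
    (hasc : ∀ u ∈ Dmu n r μ, u ≠ lam → ∃ k, k + 1 < n ∧ IsDmuAscent n r μ k u)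
    {W : Submodule K (DmuSub n r μ → K)} (hW : ∀ k, k + 1 < n → ∀ v ∈ W, U k v ∈ W)
    (hW0 : W ≠ ⊥) : Pi.single (⟨lam, hlam⟩ : DmuSub n r μ) 1 ∈ W := by
  suffices h : ∀ d, ∀ v ∈ W, v ≠ 0 →
      (∀ x : DmuSub n r μ, v x ≠ 0 → permLen lam ≤ permLen x.1 + d) →
      Pi.single (⟨lam, hlam⟩ : DmuSub n r μ) 1 ∈ W by
    obtain ⟨v, hv, hv0⟩ := Submodule.exists_mem_ne_zero_of_ne_bot hW0
    exact h (permLen lam) v hv hv0 fun _ _ => Nat.le_add_left _ _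
  intro d
  induction d with
  | zero =>
    intro v hv hv0 hlen
    refine single_one_mem_of_forall_ne_zero_eq hv hv0 fun x hx => Subtype.ext ?_
    by_contra hne
    have := hmax x.1 x.2 hne
    have := hlen x hx
    omega
  | succ d ih =>
    intro v hv hv0 hlen
    by_cases hsupp : ∀ x, v x ≠ 0 → x = ⟨lam, hlam⟩
    · exact single_one_mem_of_forall_ne_zero_eq hv hv0 hsupp
    push Not at hsupp
    obtain ⟨x, hx, hxlam⟩ := hsupp
    obtain ⟨k, hk, hxk⟩ := hasc x.1 x.2 fun he => hxlam (Subtype.ext he)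
    refine ih (U k v) (hW k hk v hv) ?_ fun y hy => ?_
    · intro h0
      have := hU.apply_apply_adjSwap_mul hk v hxk
      simp [h0, eq_comm, hx] at this
    · obtain ⟨u, hu, hyu⟩ := hU.exists_permLen_eq_succ_of_apply_ne_zero hk hy
      have := hlen u hu
      omega

end IsUFamily

theorem stmt12_general (K : Type*) [Field K] {n r : ℕ} (μ : ℕ → ℕ)
    (hsum : off μ r = n)
    (U : ℕ → ((DmuSub n r μ → K) →ₗ[K] (DmuSub n r μ → K)))
    (hU : IsUFamily K n r μ U)
    (lam : Equiv.Perm (Fin n)) (hlam : lam ∈ Dmu n r μ)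
    (hmax : ∀ u ∈ Dmu n r μ, u ≠ lam → permLen u < permLen lam) :
    (∀ k, k + 1 < n → U k (Pi.single (⟨lam, hlam⟩ : DmuSub n r μ) (1 : K)) = 0) ∧
    (∀ k, k + 1 < n → ∀ v ∈ Submodule.span K
        {Pi.single (⟨lam, hlam⟩ : DmuSub n r μ) (1 : K)},
      U k v ∈ Submodule.span K {Pi.single (⟨lam, hlam⟩ : DmuSub n r μ) (1 : K)}) ∧
    (∀ W : Submodule K (DmuSub n r μ → K),
      (∀ k, k + 1 < n → ∀ v ∈ W, U k v ∈ W) → W ≠ ⊥ →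
      Submodule.span K {Pi.single (⟨lam, hlam⟩ : DmuSub n r μ) (1 : K)} ≤ W) := by
  have hnoasc : ∀ k, k + 1 < n → ¬IsDmuAscent n r μ k lam := fun _ _ =>
    not_isDmuAscent_of_forall_permLen_lt hmax
  have hasc : ∀ u ∈ Dmu n r μ, u ≠ lam → ∃ k, k + 1 < n ∧ IsDmuAscent n r μ k u := by
    intro u hu hne
    by_contra h
    push Not at h
    exact hne (eq_of_forall_not_isDmuAscent hsum hu hlam h hnoasc)
  have hzero : ∀ k, k + 1 < n → U k (Pi.single (⟨lam, hlam⟩ : DmuSub n r μ) (1 : K)) = 0 :=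
    fun k hk => hU.apply_single_of_not_isDmuAscent hk (hnoasc k hk)
  refine ⟨hzero, fun k hk v hv => ?_, fun W hW hW0 => ?_⟩
  · obtain ⟨c, rfl⟩ := Submodule.mem_span_singleton.1 hv
    simp [hzero k hk]
  · rw [Submodule.span_singleton_le_iff_mem]
    exact hU.single_mem_of_ne_bot hlam hmax hasc hW hW0

/-- Lemma 1.3(iii) of the paper, concretely: for the unique
longest element `λ` of `D_μ`, one has `U_k (e_λ) = 0` for every `k`, so the
line `K ⬝ e_λ` is invariant and the `U_k` act on it by `0`; and every nonzero
invariant subspace of `V` contains `K ⬝ e_λ`. Hence `K ⬝ e_λ` is the unique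
minimal nonzero invariant subspace (the socle) of `V`. -/
theorem stmt12 (K : Type*) [Field K] {n r : ℕ} (hn : 1 ≤ n) (μ : ℕ → ℕ)
    (hpos : ∀ t < r, 1 ≤ μ t) (hsum : off μ r = n)
    (U : ℕ → ((DmuSub n r μ → K) →ₗ[K] (DmuSub n r μ → K)))
    (hU : IsUFamily K n r μ U)
    (lam : Equiv.Perm (Fin n)) (hlam : lam ∈ Dmu n r μ)
    (hmax : ∀ u ∈ Dmu n r μ, u ≠ lam → permLen u < permLen lam) :
    (∀ k, k + 1 < n → U k (Pi.single (⟨lam, hlam⟩ : DmuSub n r μ) (1 : K)) = 0) ∧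
    (∀ k, k + 1 < n → ∀ v ∈ Submodule.span K
        {Pi.single (⟨lam, hlam⟩ : DmuSub n r μ) (1 : K)},
      U k v ∈ Submodule.span K {Pi.single (⟨lam, hlam⟩ : DmuSub n r μ) (1 : K)}) ∧
    (∀ W : Submodule K (DmuSub n r μ → K),
      (∀ k, k + 1 < n → ∀ v ∈ W, U k v ∈ W) → W ≠ ⊥ →
      Submodule.span K {Pi.single (⟨lam, hlam⟩ : DmuSub n r μ) (1 : K)} ≤ W) :=
  stmt12_general K μ hsum U hU lam hlam hmax
end
end

section
/- Let K be a commutative ring, and let n ≥ 2 and a ≥ 1 be integers. For 1 ≤ k ≤ n−1 let σ_k be the K-algebra automorphism of the polynomial ring K[X₁,…,X_n] swapping X_k and X_{k+1} (and fixing the other variables), define the K-linear operator T_k by T_k(f) = (X_k^a + X_{k+1}^a)·σ_k(f), and for g ∈ K[X₁,…,X_n] let m_g denote multiplication by g. Then: (i) T_k ∘ T_k = m_{(X_k^a + X_{k+1}^a)²}; (ii) T_k ∘ T_{k+1} ∘ T_k = T_{k+1} ∘ T_k ∘ T_{k+1} for 1 ≤ k ≤ n−2; (iii) T_k ∘ T_l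 = T_l ∘ T_k for |k − l| ≥ 2; (iv) T_k ∘ m_{X_k} = m_{X_{k+1}} ∘ T_k and T_k ∘ m_{X_{k+1}} = m_{X_k} ∘ T_k; (v) T_k ∘ m_{X_j} = m_{X_j} ∘ T_k for j ∉ {k, k+1}. -/
/-!
Every operator `f ↦ p * rename s f` composes with another such, `f ↦ q * rename t f`, to
`f ↦ (p * rename s q) * rename (s * t) f`. Each relation therefore splits into the corresponding
Coxeter relation between transpositions and an identity between the polynomial coefficients,
which holds because `X i ^ a + X j ^ a` is symmetric in `i` and `j`.
-/

open MvPolynomial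

noncomputable section

/-- The operator `T_k (f) = (X_k ^ a + X_{k+1} ^ a) ⬝ σ_k (f)` on the polynomial
ring `K[X₁, …, X_n]`, where `σ_k` swaps the variables `X_k` and `X_{k+1}`
(identity as junk value if `k` is out of range). -/
def Tk (K : Type*) [CommRing K] (n a k : ℕ) :
    MvPolynomial (Fin n) K → MvPolynomial (Fin n) K := fun f =>
  if h : k + 1 < n then
    (X (⟨k, Nat.lt_of_succ_lt h⟩ : Fin n) ^ a + X (⟨k + 1, h⟩ : Fin n) ^ a) *
      rename (adjSwap n k) f
  else f

open Equiv

namespace Equiv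

variable {α : Type*} [DecidableEq α]

theorem swap_mul_swap_comm_of_ne {i j k l : α} (hik : i ≠ k) (hil : i ≠ l) (hjk : j ≠ k)
    (hjl : j ≠ l) : swap i j * swap k l = swap k l * swap i j := by
  have h := swap_apply_apply (swap k l) i j
  rw [swap_apply_of_ne_of_ne hik hil, swap_apply_of_ne_of_ne hjk hjl, swap_inv] at h
  conv_lhs => rw [h]
  simp only [mul_assoc, swap_mul_self, mul_one]

theorem swap_braid {i j k : α} (hij : i ≠ j) (hik : i ≠ k) (hjk : j ≠ k) :
    swap i j * swap j k * swap i j = swap j k * swap i j * swap j k := by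
  rw [swap_mul_swap_mul_swap hij hik, swap_comm i j, swap_comm j k,
    swap_mul_swap_mul_swap hjk.symm hik.symm, swap_comm]

end Equiv

section TwistedSwap

variable {σ K : Type*} [CommRing K]

theorem rename_X_pow_add_X_pow (s : σ → σ) (a : ℕ) (i j : σ) :
    rename s (X i ^ a + X j ^ a : MvPolynomial σ K) = X (s i) ^ a + X (s j) ^ a := by
  simp only [map_add, map_pow, rename_X]

variable [DecidableEq σ]

def twistedSwap (a : ℕ) (i j : σ) (f : MvPolynomial σ K) : MvPolynomial σ K :=
  (X i ^ a + X j ^ a) * rename (swap i j) f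

variable {a : ℕ} {i j k l : σ}

theorem twistedSwap_twistedSwap (f : MvPolynomial σ K) :
    twistedSwap a i j (twistedSwap a k l f) =
      (X i ^ a + X j ^ a) * (X (swap i j k) ^ a + X (swap i j l) ^ a) *
        rename (swap i j * swap k l) f := by
  simp only [twistedSwap, map_mul, rename_X_pow_add_X_pow, rename_rename, Perm.coe_mul, mul_assoc]

theorem twistedSwap_twistedSwap_twistedSwap {p q : σ} (f : MvPolynomial σ K) :
    twistedSwap a i j (twistedSwap a k l (twistedSwap a p q f)) =
      (X i ^ a + X j ^ a) * (X (swap i j k) ^ a + X (swap i j l) ^ a) *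
        (X ((swap i j * swap k l) p) ^ a + X ((swap i j * swap k l) q) ^ a) *
        rename (swap i j * swap k l * swap p q) f := by
  simp only [twistedSwap, map_mul, rename_X_pow_add_X_pow, rename_rename, Perm.coe_mul,
    Function.comp_apply, mul_assoc]

theorem twistedSwap_twistedSwap_self (f : MvPolynomial σ K) :
    twistedSwap a i j (twistedSwap a i j f) = (X i ^ a + X j ^ a) ^ 2 * f := by
  rw [twistedSwap_twistedSwap, swap_apply_left, swap_apply_right, swap_mul_self,
    Perm.coe_one, rename_id, AlgHom.id_apply, add_comm (X j ^ a), sq]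

theorem twistedSwap_comm (hik : i ≠ k) (hil : i ≠ l) (hjk : j ≠ k) (hjl : j ≠ l)
    (f : MvPolynomial σ K) :
    twistedSwap a i j (twistedSwap a k l f) = twistedSwap a k l (twistedSwap a i j f) := by
  rw [twistedSwap_twistedSwap, twistedSwap_twistedSwap, swap_apply_of_ne_of_ne hik.symm hjk.symm,
    swap_apply_of_ne_of_ne hil.symm hjl.symm, swap_apply_of_ne_of_ne hik hil,
    swap_apply_of_ne_of_ne hjk hjl, swap_mul_swap_comm_of_ne hik hil hjk hjl, mul_comm (_ + _)]

theorem twistedSwap_braid (hij : i ≠ j) (hik : i ≠ k) (hjk : j ≠ k) (f : MvPolynomial σ K) :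
    twistedSwap a i j (twistedSwap a j k (twistedSwap a i j f)) =
      twistedSwap a j k (twistedSwap a i j (twistedSwap a j k f)) := by
  rw [twistedSwap_twistedSwap_twistedSwap, twistedSwap_twistedSwap_twistedSwap,
    swap_braid hij hik hjk]
  simp only [Perm.mul_apply, swap_apply_left, swap_apply_right,
    swap_apply_of_ne_of_ne hik.symm hjk.symm, swap_apply_of_ne_of_ne hij hik]
  ring

theorem twistedSwap_X_mul (f : MvPolynomial σ K) :
    twistedSwap a i j (X l * f) = X (swap i j l) * twistedSwap a i j f := by
  rw [twistedSwap, twistedSwap, map_mul, rename_X, mul_left_comm]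

end TwistedSwap

theorem Tk_eq_twistedSwap (K : Type*) [CommRing K] {n k : ℕ} (a : ℕ) (hk : k + 1 < n) :
    Tk K n a k = twistedSwap a (⟨k, Nat.lt_of_succ_lt hk⟩ : Fin n) ⟨k + 1, hk⟩ := by
  funext f
  simp only [Tk, adjSwap, hk, dite_true, twistedSwap]

theorem stmt13_general (K : Type*) [CommRing K] (n a : ℕ) :
    (∀ k (hk : k + 1 < n), ∀ f : MvPolynomial (Fin n) K,
      Tk K n a k (Tk K n a k f) =
        (X (⟨k, Nat.lt_of_succ_lt hk⟩ : Fin n) ^ a + X (⟨k + 1, hk⟩ : Fin n) ^ a) ^ 2 * f) ∧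
    (∀ k, k + 2 < n → ∀ f : MvPolynomial (Fin n) K,
      Tk K n a k (Tk K n a (k + 1) (Tk K n a k f)) =
        Tk K n a (k + 1) (Tk K n a k (Tk K n a (k + 1) f))) ∧
    (∀ k l, k + 1 < n → l + 1 < n → (k + 2 ≤ l ∨ l + 2 ≤ k) →
      ∀ f : MvPolynomial (Fin n) K,
        Tk K n a k (Tk K n a l f) = Tk K n a l (Tk K n a k f)) ∧
    (∀ k (hk : k + 1 < n), ∀ f : MvPolynomial (Fin n) K,
      Tk K n a k (X (⟨k, Nat.lt_of_succ_lt hk⟩ : Fin n) * f) =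
          X (⟨k + 1, hk⟩ : Fin n) * Tk K n a k f ∧
      Tk K n a k (X (⟨k + 1, hk⟩ : Fin n) * f) =
          X (⟨k, Nat.lt_of_succ_lt hk⟩ : Fin n) * Tk K n a k f) ∧
    (∀ k, k + 1 < n → ∀ j (hj : j < n), j ≠ k → j ≠ k + 1 →
      ∀ f : MvPolynomial (Fin n) K,
        Tk K n a k (X (⟨j, hj⟩ : Fin n) * f) = X (⟨j, hj⟩ : Fin n) * Tk K n a k f) := by
  have ne {i j : ℕ} (hi : i < n) (hj : j < n) (h : i ≠ j) : (⟨i, hi⟩ : Fin n) ≠ ⟨j, hj⟩ :=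
    Fin.ne_of_val_ne h
  refine ⟨fun k hk f => ?_, fun k hk f => ?_, fun k l hk hl hkl f => ?_, fun k hk f => ?_,
    fun k hk j hj hjk hjk' f => ?_⟩
  · rw [Tk_eq_twistedSwap K a hk, twistedSwap_twistedSwap_self]
  · rw [Tk_eq_twistedSwap K a (k := k) (by omega), Tk_eq_twistedSwap K a (k := k + 1) hk]
    exact twistedSwap_braid (ne _ _ (by omega)) (ne _ _ (by omega)) (ne _ _ (by omega)) f
  · rw [Tk_eq_twistedSwap K a hk, Tk_eq_twistedSwap K a hl]
    exact twistedSwap_comm (ne _ _ (by omega)) (ne _ _ (by omega)) (ne _ _ (by omega))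
      (ne _ _ (by omega)) f
  · rw [Tk_eq_twistedSwap K a hk, twistedSwap_X_mul, twistedSwap_X_mul, swap_apply_left,
      swap_apply_right]
    exact ⟨rfl, rfl⟩
  · rw [Tk_eq_twistedSwap K a hk, twistedSwap_X_mul,
      swap_apply_of_ne_of_ne (ne _ _ hjk) (ne _ _ hjk')]

/-- the operators `T_k` (together with multiplication by the
variables) satisfy the defining relations of the quiver Hecke algebra `𝒮R(ni)`
attached to an imaginary non-isotropic index `i` with `a = -a_{ii}/2 ≥ 1`
(Section 4.1 of the paper): (i) `T_k² = m_{(X_k^a + X_{k+1}^a)²}`;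
(ii) the braid relations; (iii) distant `T`'s commute; (iv) `T_k` exchanges
multiplication by `X_k` and by `X_{k+1}`; (v) `T_k` commutes with
multiplication by `X_j` for `j ∉ {k, k+1}`. This verifies that `𝒮P_ν` is a
module over `𝒮R(ν)` for a single imaginary non-isotropic colour. -/
theorem stmt13 (K : Type*) [CommRing K] (n a : ℕ) (hn : 2 ≤ n) (ha : 1 ≤ a) :
    (∀ k (hk : k + 1 < n), ∀ f : MvPolynomial (Fin n) K,
      Tk K n a k (Tk K n a k f) =
        (X (⟨k, Nat.lt_of_succ_lt hk⟩ : Fin n) ^ a + X (⟨k + 1, hk⟩ : Fin n) ^ a) ^ 2 * f) ∧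
    (∀ k, k + 2 < n → ∀ f : MvPolynomial (Fin n) K,
      Tk K n a k (Tk K n a (k + 1) (Tk K n a k f)) =
        Tk K n a (k + 1) (Tk K n a k (Tk K n a (k + 1) f))) ∧
    (∀ k l, k + 1 < n → l + 1 < n → (k + 2 ≤ l ∨ l + 2 ≤ k) →
      ∀ f : MvPolynomial (Fin n) K,
        Tk K n a k (Tk K n a l f) = Tk K n a l (Tk K n a k f)) ∧
    (∀ k (hk : k + 1 < n), ∀ f : MvPolynomial (Fin n) K,
      Tk K n a k (X (⟨k, Nat.lt_of_succ_lt hk⟩ : Fin n) * f) =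
          X (⟨k + 1, hk⟩ : Fin n) * Tk K n a k f ∧
      Tk K n a k (X (⟨k + 1, hk⟩ : Fin n) * f) =
          X (⟨k, Nat.lt_of_succ_lt hk⟩ : Fin n) * Tk K n a k f) ∧
    (∀ k, k + 1 < n → ∀ j (hj : j < n), j ≠ k → j ≠ k + 1 →
      ∀ f : MvPolynomial (Fin n) K,
        Tk K n a k (X (⟨j, hj⟩ : Fin n) * f) = X (⟨j, hj⟩ : Fin n) * Tk K n a k f) :=
  stmt13_general K n a
end
end
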